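/- arXiv:2603.12107 — 2 statements merged into one kernel-verified Lean document; each statement's English description precedes it below -/
import Mathlib

section
/- Let m > 0, t_f > 0, I0 ∈ (0,1). For every x̄ ∈ (0, t_f), the partial derivative of 𝒟(x, x̄) with respect to the first argument x, evaluated at x = x̄, exists and equals (1 − I(t_f − x̄)) · (1 − I(t_f − x̄)·(m − x̄)) / (m·(1 − I0)). In particular, x̄ is a critical point of x ↦ 𝒟(x, x̄) at x = x̄ if and only if I(t_f − x̄)·(m − x̄) = 1. -/
/-!
Away from the diagonal `x = x̄` the susceptibility `p(·, x̄)` is given by two smooth formulas: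
`(1 - I(t_f - x)) / (1 - I0)` for `x ≥ x̄`, and `(1 - I(t_f - x̄)) / (1 - I0) · exp(-I(t_f - x̄)(x̄ - x))`
for `x ≤ x̄`. Since `I` solves the logistic equation `I' = I (1 - I)`, both branches have the same
value and the same slope `I (1 - I) / (1 - I0)` at `x̄`, so `p(·, x̄)` is differentiable there and the
product rule gives the derivative of `𝒟`. The critical-point criterion follows because `I < 1`.
-/

/-- Prevalence function `I(u) = I0 / (I0 + (1 - I0) exp(-u))`. -/
noncomputable def Ifun (I0 u : ℝ) : ℝ := I0 / (I0 + (1 - I0) * Real.exp (-u))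

/-- Susceptibility probability `p(x, x̄)`. -/
noncomputable def pSus (tf I0 x xb : ℝ) : ℝ :=
  ((1 - Ifun I0 (tf - max x xb)) / (1 - I0)) *
    Real.exp (-(Ifun I0 (tf - max x xb)) * max (xb - x) 0)

/-- Restricted disutility `𝒟(x, x̄) = 1 - p(x,x̄)(1 - x/m)`. -/
noncomputable def Dis (m tf I0 x xb : ℝ) : ℝ := 1 - pSus tf I0 x xb * (1 - x / m)

open Set

theorem hasDerivAt_of_eqOn_Iic_of_eqOn_Ici {F : Type*} [NormedAddCommGroup F] [NormedSpace ℝ F]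
    {f g h : ℝ → F} {f' : F} {a : ℝ} (hg : HasDerivAt g f' a) (hh : HasDerivAt h f' a)
    (hfg : EqOn f g (Iic a)) (hfh : EqOn f h (Ici a)) : HasDerivAt f f' a := by
  have := (hg.hasDerivWithinAt.congr hfg (hfg self_mem_Iic)).union
    (hh.hasDerivWithinAt.congr hfh (hfh self_mem_Ici))
  rwa [Iic_union_Ici, hasDerivWithinAt_univ] at this

section Prevalence

variable {I0 : ℝ}

theorem Ifun_denom_pos (h0 : 0 ≤ I0) (h1 : I0 ≤ 1) (u : ℝ) :
    0 < I0 + (1 - I0) * Real.exp (-u) := by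
  rcases h0.lt_or_eq with h0 | rfl
  · have := mul_nonneg (sub_nonneg.2 h1) (Real.exp_pos (-u)).le
    linarith
  · simpa using Real.exp_pos (-u)

theorem Ifun_lt_one (h0 : 0 ≤ I0) (h1 : I0 < 1) (u : ℝ) : Ifun I0 u < 1 := by
  rw [Ifun, div_lt_one (Ifun_denom_pos h0 h1.le u)]
  have := mul_pos (sub_pos.2 h1) (Real.exp_pos (-u))
  linarith

theorem hasDerivAt_Ifun (h0 : 0 ≤ I0) (h1 : I0 ≤ 1) (u : ℝ) :
    HasDerivAt (Ifun I0) (Ifun I0 u * (1 - Ifun I0 u)) u := by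
  have hD := Ifun_denom_pos h0 h1 u
  have hdenom : HasDerivAt (fun v => I0 + (1 - I0) * Real.exp (-v))
      ((1 - I0) * (Real.exp (-u) * -1)) u :=
    (((hasDerivAt_id u).neg.exp).const_mul (1 - I0)).const_add I0
  refine ((hasDerivAt_const u I0).div hdenom hD.ne').congr_deriv ?_
  rw [Ifun]
  field_simp
  ring

end Prevalence

section Susceptibility

variable {tf I0 xb : ℝ}

theorem pSus_of_le (x : ℝ) (hx : x ≤ xb) :
    pSus tf I0 x xb =
      (1 - Ifun I0 (tf - xb)) / (1 - I0) * Real.exp (-Ifun I0 (tf - xb) * (xb - x)) := by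
  rw [pSus, max_eq_right hx, max_eq_left (sub_nonneg.2 hx)]

theorem pSus_of_ge (x : ℝ) (hx : xb ≤ x) :
    pSus tf I0 x xb = (1 - Ifun I0 (tf - x)) / (1 - I0) := by
  rw [pSus, max_eq_left hx, max_eq_right (sub_nonpos.2 hx), mul_zero, Real.exp_zero, mul_one]

theorem pSus_self : pSus tf I0 xb xb = (1 - Ifun I0 (tf - xb)) / (1 - I0) :=
  pSus_of_ge xb le_rfl

theorem hasDerivAt_pSus_self (h0 : 0 ≤ I0) (h1 : I0 ≤ 1) :
    HasDerivAt (fun x => pSus tf I0 x xb)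
      (Ifun I0 (tf - xb) * (1 - Ifun I0 (tf - xb)) / (1 - I0)) xb := by
  set J := Ifun I0 (tf - xb)
  have hleft : HasDerivAt (fun x => (1 - J) / (1 - I0) * Real.exp (-J * (xb - x)))
      (J * (1 - J) / (1 - I0)) xb := by
    refine ((((hasDerivAt_id xb).const_sub xb).const_mul (-J)).exp.const_mul
      ((1 - J) / (1 - I0))).congr_deriv ?_
    simp only [id, sub_self, mul_zero, Real.exp_zero]
    ring
  have hright : HasDerivAt (fun x => (1 - Ifun I0 (tf - x)) / (1 - I0))
      (J * (1 - J) / (1 - I0)) xb := by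
    refine ((((hasDerivAt_Ifun h0 h1 (tf - xb)).comp xb
      ((hasDerivAt_id xb).const_sub tf)).const_sub 1).div_const (1 - I0)).congr_deriv ?_
    ring
  exact hasDerivAt_of_eqOn_Iic_of_eqOn_Ici hleft hright
    (fun x hx => pSus_of_le x hx) (fun x hx => pSus_of_ge x hx)

end Susceptibility

theorem stmt5_general (m tf I0 : ℝ) (hm : 0 < m)
    (hI0 : I0 ∈ Set.Ioo (0:ℝ) 1) :
    ∀ xb ∈ Set.Ioo (0:ℝ) tf,
      HasDerivAt (fun x => Dis m tf I0 x xb)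
        ((1 - Ifun I0 (tf - xb)) * (1 - Ifun I0 (tf - xb) * (m - xb)) / (m * (1 - I0)))
        xb ∧
      ((1 - Ifun I0 (tf - xb)) * (1 - Ifun I0 (tf - xb) * (m - xb)) / (m * (1 - I0)) = 0
        ↔ Ifun I0 (tf - xb) * (m - xb) = 1) := by
  intro xb _
  obtain ⟨h0, h1⟩ := hI0
  have hJ : Ifun I0 (tf - xb) < 1 := Ifun_lt_one h0.le h1 _
  have hp := hasDerivAt_pSus_self (tf := tf) (xb := xb) h0.le h1.le
  constructor
  · refine ((hp.mul (((hasDerivAt_id xb).div_const m).const_sub 1)).const_sub 1).congr_deriv ?_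
    rw [pSus_self, id]
    field_simp [(sub_pos.2 h1).ne']
    ring
  · have hfactor : (1 - Ifun I0 (tf - xb)) / (m * (1 - I0)) ≠ 0 :=
      (div_pos (sub_pos.2 hJ) (mul_pos hm (sub_pos.2 h1))).ne'
    rw [mul_div_right_comm, mul_eq_zero_iff_left hfactor, sub_eq_zero, eq_comm]

/-- On the diagonal, the partial derivative of `𝒟(x, x̄)` with respect to the first
argument at `x = x̄` equals `(1 - I(t_f - x̄))(1 - I(t_f - x̄)(m - x̄)) / (m (1 - I0))`;
in particular `x̄` is a critical point of `x ↦ 𝒟(x, x̄)` at `x = x̄` if and only if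
`I(t_f - x̄)(m - x̄) = 1`. -/
theorem stmt5 (m tf I0 : ℝ) (hm : 0 < m) (htf : 0 < tf)
    (hI0 : I0 ∈ Set.Ioo (0:ℝ) 1) :
    ∀ xb ∈ Set.Ioo (0:ℝ) tf,
      HasDerivAt (fun x => Dis m tf I0 x xb)
        ((1 - Ifun I0 (tf - xb)) * (1 - Ifun I0 (tf - xb) * (m - xb)) / (m * (1 - I0)))
        xb ∧
      ((1 - Ifun I0 (tf - xb)) * (1 - Ifun I0 (tf - xb) * (m - xb)) / (m * (1 - I0)) = 0
        ↔ Ifun I0 (tf - xb) * (m - xb) = 1) :=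
  stmt5_general m tf I0 hm hI0
end

section
/- Let m > 0, t_f > 0, I0 ∈ (0,1). The function φ(x) = I(t_f − x)·(m − x) is strictly decreasing on the interval [0, min(t_f, m)]. Consequently, the interior equilibrium condition I(t_f − x)·(m − x) = 1 has at most one solution x in (0, t_f). -/
lemma denom_pos {I0 : ℝ} (h0 : 0 < I0) (h1 : I0 < 1) (u : ℝ) :
    0 < I0 + (1 - I0) * Real.exp (-u) :=
  add_pos h0 (mul_pos (by linarith) (Real.exp_pos _))

lemma Ifun_pos {I0 : ℝ} (h0 : 0 < I0) (h1 : I0 < 1) (u : ℝ) : 0 < Ifun I0 u :=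
  div_pos h0 (denom_pos h0 h1 u)

lemma Ifun_anti {I0 tf : ℝ} (h0 : 0 < I0) (h1 : I0 < 1) {x y : ℝ} (hxy : x < y) :
    Ifun I0 (tf - y) < Ifun I0 (tf - x) := by
  unfold Ifun
  apply div_lt_div_of_pos_left h0 (denom_pos h0 h1 _)
  have : Real.exp (-(tf - y)) > Real.exp (-(tf - x)) := by
    apply Real.exp_lt_exp.mpr; linarith
  nlinarith [Real.exp_pos (-(tf - x))]

/-- The function `φ(x) = I(t_f - x)(m - x)` is strictly decreasing on
`[0, min(t_f, m)]`; consequently the interior equilibrium condition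
`I(t_f - x)(m - x) = 1` has at most one solution in `(0, t_f)`. -/
theorem stmt9 (m tf I0 : ℝ) (hm : 0 < m) (htf : 0 < tf)
    (hI0 : I0 ∈ Set.Ioo (0:ℝ) 1) :
    StrictAntiOn (fun x => Ifun I0 (tf - x) * (m - x)) (Set.Icc 0 (min tf m)) ∧
    ∀ x ∈ Set.Ioo (0:ℝ) tf, ∀ y ∈ Set.Ioo (0:ℝ) tf,
      Ifun I0 (tf - x) * (m - x) = 1 → Ifun I0 (tf - y) * (m - y) = 1 → x = y := by
  obtain ⟨h0, h1⟩ := hI0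
  have hanti : StrictAntiOn (fun x => Ifun I0 (tf - x) * (m - x))
      (Set.Icc 0 (min tf m)) := by
    intro x hx y hy hxy
    have hym : y ≤ m := le_trans hy.2 (min_le_right _ _)
    have hIy : 0 < Ifun I0 (tf - y) := Ifun_pos h0 h1 _
    have hIx : 0 < Ifun I0 (tf - x) := Ifun_pos h0 h1 _
    have hI : Ifun I0 (tf - y) < Ifun I0 (tf - x) := Ifun_anti h0 h1 hxy
    have hmy : 0 ≤ m - y := by linarith
    have hmx : m - y < m - x := by linarith
    calc Ifun I0 (tf - y) * (m - y)
        ≤ Ifun I0 (tf - x) * (m - y) := mul_le_mul_of_nonneg_right hI.le hmy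
      _ < Ifun I0 (tf - x) * (m - x) := by
          exact mul_lt_mul_of_pos_left hmx hIx
  refine ⟨hanti, ?_⟩
  intro x hx y hy hex hey
  have hmem : ∀ z ∈ Set.Ioo (0:ℝ) tf, Ifun I0 (tf - z) * (m - z) = 1 →
      z ∈ Set.Icc 0 (min tf m) := by
    intro z hz he
    have hIz : 0 < Ifun I0 (tf - z) := Ifun_pos h0 h1 _
    have : 0 < m - z := by nlinarith
    exact ⟨hz.1.le, le_min hz.2.le (by linarith)⟩
  exact hanti.injOn (hmem x hx hex) (hmem y hy hey) (hex.trans hey.symm)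
end
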